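/- Let A = (a_{ij}) be a 2n×2n multiparameter quantum matrix over R with the (p,λ)-condition, and let B = (b_{ij}) be a 2n×2n array of elements of R with b_{ii} = 0 for all i and b_{ji} = −p_{ij} b_{ij} for all i < j, such that every entry of B commutes with every entry of A. Let C = AᵀBA, i.e., c_{ij} = Σ_{k,l} a_{ki} b_{kl} a_{lj}. Then: (1) c_{ii} = 0 for all i; (2) c_{ji} = −p_{ij} c_{ij} for all i < j; and (3) for i < j, c_{ij} = Σ_{k<l} det_q(A^{kl}_{ij}) · b_{kl}. -/

import Mathlib

open Finset

noncomputable section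

attribute [local instance] Classical.propDecidable

/-- Ordered product `f 0 * f 1 * ... * f (n-1)` of noncommuting elements. -/
def ordProd {R : Type*} [Monoid R] {n : ℕ} (f : Fin n → R) : R :=
  (List.ofFn f).prod

/-- The generalized sign `(−q)_σ` with column labels `cols`:
`(−1)^{ℓ(σ)} ∏_{k<k', σ(k)>σ(k')} q_{cols(σ(k')) cols(σ(k))}`. -/
def qSign {N t : ℕ} (q : Fin N → Fin N → ℂ) (cols : Fin t → Fin N)
    (σ : Equiv.Perm (Fin t)) : ℂ :=
  ∏ ij ∈ Finset.univ.filter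
      (fun ij : Fin t × Fin t => ij.1 < ij.2 ∧ σ ij.2 < σ ij.1),
    (-(q (cols (σ ij.2)) (cols (σ ij.1))))

/-- The quantum minor `det_q(A^{rows}_{cols})`. -/
def qMinor {R : Type*} [Ring R] [Algebra ℂ R] {N t : ℕ}
    (q : Fin N → Fin N → ℂ) (rows cols : Fin t → Fin N)
    (a : Fin N → Fin N → R) : R :=
  ∑ σ : Equiv.Perm (Fin t),
    qSign q cols σ • ordProd (fun k => a (rows k) (cols (σ k)))

/-- Quantum row determinant `rdet(A) = Σ_σ (−q)_σ a_{1σ(1)} ⋯ a_{nσ(n)}`. -/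
def rdet {R : Type*} [Ring R] [Algebra ℂ R] {N : ℕ}
    (q : Fin N → Fin N → ℂ) (a : Fin N → Fin N → R) : R :=
  ∑ σ : Equiv.Perm (Fin N),
    qSign q id σ • ordProd (fun i => a i (σ i))

/-- Quantum column determinant `cdet(A) = Σ_σ (−p)_σ a_{σ(1)1} ⋯ a_{σ(n)n}`. -/
def cdet {R : Type*} [Ring R] [Algebra ℂ R] {N : ℕ}
    (p : Fin N → Fin N → ℂ) (a : Fin N → Fin N → R) : R :=
  ∑ σ : Equiv.Perm (Fin N),
    qSign p id σ • ordProd (fun i => a (σ i) i)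

/-- Conditions on the parameters: they are nonzero, `p_{ii} = q_{ii} = 1`,
and `p_{ij}p_{ji} = q_{ij}q_{ji} = 1`. -/
def ParamConds {N : ℕ} (p q : Fin N → Fin N → ℂ) : Prop :=
  (∀ i j, p i j ≠ 0 ∧ q i j ≠ 0) ∧
  (∀ i, p i i = 1 ∧ q i i = 1) ∧
  (∀ i j, p i j * p j i = 1 ∧ q i j * q j i = 1)

/-- The `(p,λ)`-condition: `p_{ij} q_{ij} = λ` for `i < j`. -/
def PLambdaCond {N : ℕ} (p q : Fin N → Fin N → ℂ) (lam : ℂ) : Prop :=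
  ∀ i j : Fin N, i < j → p i j * q i j = lam

/-- `A = (a_{ij})` is a multiparameter quantum matrix for the parameters `p, q`. -/
def IsQuantumMatrix {R : Type*} [Ring R] [Algebra ℂ R] {N : ℕ}
    (p q : Fin N → Fin N → ℂ) (a : Fin N → Fin N → R) : Prop :=
  (∀ i k l : Fin N, k < l → a i k * a i l = q k l • (a i l * a i k)) ∧
  (∀ i j k : Fin N, i < j → a i k * a j k = p i j • (a j k * a i k)) ∧
  (∀ i j k l : Fin N, i < j → k < l →
    a i k * a j l - (q k l / q i j) • (a j l * a i k)
      = q k l • (a i l * a j k) - (q i j)⁻¹ • (a j k * a i l)) ∧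
  (∀ i j k l : Fin N, i < j → k < l →
    a i k * a j l - (p i j / p k l) • (a j l * a i k)
      = p i j • (a j k * a i l) - (p k l)⁻¹ • (a i l * a j k))

/-- `x_1, …, x_n` satisfy the `q`-exterior relations. -/
def QExterior {R : Type*} [Ring R] [Algebra ℂ R] {N : ℕ}
    (q : Fin N → Fin N → ℂ) (x : Fin N → R) : Prop :=
  (∀ i, x i * x i = 0) ∧
  (∀ i j : Fin N, i < j → x j * x i = -(q i j) • (x i * x j))

/-- The quantum integer `[k]_λ = 1 + λ + ⋯ + λ^{k−1}`. -/
def qNum (lam : ℂ) (k : ℕ) : ℂ := ∑ i ∈ Finset.range k, lam ^ i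

/-- The quantum factorial `[n]_λ! = [1]_λ [2]_λ ⋯ [n]_λ`. -/
def qFact (lam : ℂ) (n : ℕ) : ℂ := ∏ k ∈ Finset.range n, qNum lam (k + 1)

/-- The index `2i−1` (1-based), i.e. position `2i` (0-based), inside `Fin (2n)`. -/
def pfIdx1 {n : ℕ} (i : Fin n) : Fin (2 * n) :=
  ⟨2 * i.1, by have := i.isLt; omega⟩

/-- The index `2i` (1-based), i.e. position `2i+1` (0-based), inside `Fin (2n)`. -/
def pfIdx2 {n : ℕ} (i : Fin n) : Fin (2 * n) :=
  ⟨2 * i.1 + 1, by have := i.isLt; omega⟩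

/-- The multiparameter quantum Pfaffian
`Pf_q(B) = Σ_σ (−q)_σ b_{σ(1)σ(2)} ⋯ b_{σ(2n−1)σ(2n)}`, the sum over
permutations `σ` of `{1,…,2n}` with `σ(2i−1) < σ(2i)` for all `i`. -/
def Pf {R : Type*} [Ring R] [Algebra ℂ R] {n : ℕ}
    (q : Fin (2 * n) → Fin (2 * n) → ℂ) (b : Fin (2 * n) → Fin (2 * n) → R) : R :=
  ∑ σ ∈ Finset.univ.filter
      (fun σ : Equiv.Perm (Fin (2 * n)) => ∀ i : Fin n, σ (pfIdx1 i) < σ (pfIdx2 i)),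
    qSign q id σ • ordProd (fun i : Fin n => b (σ (pfIdx1 i)) (σ (pfIdx2 i)))

/-- Sub-Pfaffian along an index map `f` (typically the increasing enumeration of
a subset of the indices): the parameters and the entries are restricted along `f`. -/
def PfOn {R : Type*} [Ring R] [Algebra ℂ R] {N m : ℕ}
    (q : Fin N → Fin N → ℂ) (b : Fin N → Fin N → R) (f : Fin (2 * m) → Fin N) : R :=
  Pf (fun i j => q (f i) (f j)) (fun i j => b (f i) (f j))

/-- `inv(I, J) = ∏_{i ∈ I, j ∈ J, i > j} (−q_{ji})`. -/
def invQ {N : ℕ} (q : Fin N → Fin N → ℂ) (I J : Finset (Fin N)) : ℂ :=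
  ∏ i ∈ I, ∏ j ∈ J, if j < i then -(q j i) else 1

/-- The position `k·m + r` within `Fin (m·n)`, i.e. the `r`-th index of the
`k`-th block of size `m`. -/
def blockIdx {m n : ℕ} (k : Fin n) (r : Fin m) : Fin (m * n) :=
  ⟨k.1 * m + r.1, by
    have hk : k.1 + 1 ≤ n := k.isLt
    have hr : r.1 < m := r.isLt
    calc k.1 * m + r.1 < k.1 * m + m := Nat.add_lt_add_left hr _
      _ = (k.1 + 1) * m := (Nat.succ_mul k.1 m).symm
      _ ≤ n * m := Nat.mul_le_mul hk (le_refl m)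
      _ = m * n := Nat.mul_comm n m⟩

/-- The multiparameter quantum hyper-Pfaffian
`Pf_q(B) = Σ_{σ∈Π} (−q)_σ b_{σ(1)…σ(m)} ⋯ b_{σ(m(n−1)+1)…σ(mn)}`, where `Π` is
the set of permutations of `{1,…,mn}` increasing on each consecutive block of
length `m`. -/
def hPf {R : Type*} [Ring R] [Algebra ℂ R] {m n : ℕ}
    (q : Fin (m * n) → Fin (m * n) → ℂ) (b : (Fin m → Fin (m * n)) → R) : R :=
  ∑ σ ∈ Finset.univ.filter
      (fun σ : Equiv.Perm (Fin (m * n)) =>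
        ∀ k : Fin n, StrictMono (fun r : Fin m => σ (blockIdx k r))),
    qSign q id σ • ordProd (fun k : Fin n => b (fun r => σ (blockIdx k r)))

/-- The increasing enumeration of `{1,…,n} \ {k}` (the "hat" of `k`). -/
def hatIdx {n : ℕ} (k : Fin n) (r : Fin (n - 1)) : Fin n :=
  if h : r.1 < k.1 then ⟨r.1, by have := k.isLt; omega⟩
  else ⟨r.1 + 1, by have := r.isLt; omega⟩

/-- The increasing enumeration of `{s+1,…,n}`. -/
def tailIdx {n : ℕ} (s : ℕ) (k : Fin (n - s)) : Fin n :=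
  ⟨s + k.1, by have := k.isLt; omega⟩

/-- The increasing enumeration of `{1,…,t}` inside `{1,…,n}`. -/
def headIdx {n : ℕ} (t : ℕ) (ht : t ≤ n) (k : Fin t) : Fin n :=
  ⟨k.1, lt_of_lt_of_le k.isLt ht⟩

/-- `σ` is a `t`-shuffle: `σ(1) < ⋯ < σ(t)` and `σ(t+1) < ⋯ < σ(n)`. -/
def IsShuffle {n : ℕ} (t : ℕ) (σ : Equiv.Perm (Fin n)) : Prop :=
  (∀ k l : Fin n, k < l → l.1 < t → σ k < σ l) ∧
  (∀ k l : Fin n, k < l → t ≤ k.1 → σ k < σ l)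

/-!
Since `b` vanishes on the diagonal, the terms of `c i j` pair up over `k < l`; the relation
`b l k = -p k l • b k l` and the commutation of `b` with `a` collect each pair into
`det_q(A^{kl}_{ij}) b_{kl}`. Parts (1) and (2) then become column identities for `2×2` quantum
minors: equal columns give `0` by the column relation of `A`, and swapping the columns multiplies
the minor by `-p i j` by the last (row-parameter) cross relation.
-/

/-- `qMinor₂ p a k l i j` is `det_q(A^{kl}_{ij}) = a_{ki} a_{lj} − p_{kl} a_{li} a_{kj}`. -/
def qMinor₂ {R : Type*} [Ring R] [Algebra ℂ R] {N : ℕ} (p : Fin N → Fin N → ℂ)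
    (a : Fin N → Fin N → R) (k l i j : Fin N) : R :=
  a k i * a l j - p k l • (a l i * a k j)

theorem sum_sum_eq_sum_lt_add_swap {ι M : Type*} [Fintype ι] [LinearOrder ι]
    [DecidablePred fun kl : ι × ι => kl.1 < kl.2] [AddCommMonoid M] (f : ι → ι → M)
    (hf : ∀ k, f k k = 0) :
    ∑ k, ∑ l, f k l =
      ∑ kl ∈ univ.filter (fun kl : ι × ι => kl.1 < kl.2), (f kl.1 kl.2 + f kl.2 kl.1) := by
  have hge : ∑ kl ∈ univ.filter (fun kl : ι × ι => ¬ kl.1 < kl.2), f kl.1 kl.2 =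
      ∑ kl ∈ univ.filter (fun kl : ι × ι => kl.2 < kl.1), f kl.1 kl.2 := by
    refine (sum_subset (fun kl hkl => ?_) fun kl hnlt hngt => ?_).symm
    · simp only [mem_filter, mem_univ, true_and] at hkl ⊢
      exact not_lt_of_gt hkl
    · simp only [mem_filter, mem_univ, true_and, not_lt] at hnlt hngt
      rw [le_antisymm hnlt hngt, hf]
  have hgt : ∑ kl ∈ univ.filter (fun kl : ι × ι => kl.2 < kl.1), f kl.1 kl.2 =
      ∑ kl ∈ univ.filter (fun kl : ι × ι => kl.1 < kl.2), f kl.2 kl.1 :=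
    sum_equiv (Equiv.prodComm ι ι) (by simp) (by simp)
  rw [← Fintype.sum_prod_type', ← sum_filter_add_sum_filter_not univ
    (fun kl : ι × ι => kl.1 < kl.2), hge, hgt, sum_add_distrib]

section QuantumMatrix

variable {R : Type*} [Ring R] [Algebra ℂ R] {N : ℕ} {p q : Fin N → Fin N → ℂ}
  {a : Fin N → Fin N → R}

theorem IsQuantumMatrix.qMinor₂_self (ha : IsQuantumMatrix p q a) {k l : Fin N}
    (hkl : k < l) (i : Fin N) : qMinor₂ p a k l i i = 0 :=
  sub_eq_zero.2 (ha.2.1 k l i hkl)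

theorem IsQuantumMatrix.qMinor₂_swap (ha : IsQuantumMatrix p q a) {k l i j : Fin N}
    (hkl : k < l) (hij : i < j) (hp : p i j ≠ 0) :
    qMinor₂ p a k l j i = -(p i j) • qMinor₂ p a k l i j := by
  have h := congrArg (p i j • ·) (ha.2.2.2 k l i j hkl hij)
  simp only [smul_sub, smul_smul, mul_div_cancel₀ _ hp, mul_inv_cancel₀ hp, one_smul] at h
  unfold qMinor₂
  linear_combination (norm := module) h

theorem sum_sum_mul_mul_eq_sum_qMinor₂_mul {b : Fin N → Fin N → R} (hb0 : ∀ k, b k k = 0)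
    (hbskew : ∀ k l, k < l → b l k = -(p k l) • b k l)
    (hcomm : ∀ k l r s, Commute (b k l) (a r s)) (i j : Fin N) :
    ∑ k, ∑ l, a k i * b k l * a l j =
      ∑ kl ∈ univ.filter (fun kl : Fin N × Fin N => kl.1 < kl.2),
        qMinor₂ p a kl.1 kl.2 i j * b kl.1 kl.2 := by
  rw [sum_sum_eq_sum_lt_add_swap _ fun k => by rw [hb0, mul_zero, zero_mul]]
  refine sum_congr rfl fun ⟨k, l⟩ hkl => ?_
  have hb_right (x : R) (r s : Fin N) : x * b k l * a r s = x * a r s * b k l := by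
    rw [mul_assoc, (hcomm k l r s).eq, mul_assoc]
  rw [hbskew k l (mem_filter.1 hkl).2, mul_smul_comm, smul_mul_assoc, hb_right, hb_right,
    qMinor₂, sub_mul, smul_mul_assoc, neg_smul, sub_eq_add_neg]

end QuantumMatrix

theorem transformed_antisymmetric_general {R : Type*} [Ring R] [Algebra ℂ R]
    {n : ℕ}
    (p q : Fin (2 * n) → Fin (2 * n) → ℂ)
    (hpq : ParamConds p q)
    (a : Fin (2 * n) → Fin (2 * n) → R) (ha : IsQuantumMatrix p q a)
    (b : Fin (2 * n) → Fin (2 * n) → R)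
    (hb0 : ∀ i, b i i = 0)
    (hbskew : ∀ i j : Fin (2 * n), i < j → b j i = -(p i j) • b i j)
    (hcomm : ∀ i j k l, Commute (b i j) (a k l))
    (c : Fin (2 * n) → Fin (2 * n) → R)
    (hc : ∀ i j, c i j = ∑ k, ∑ l, a k i * b k l * a l j) :
    (∀ i, c i i = 0) ∧
    (∀ i j : Fin (2 * n), i < j → c j i = -(p i j) • c i j) ∧
    (∀ i j : Fin (2 * n), i < j →
      c i j =
        ∑ kl ∈ Finset.univ.filter
            (fun kl : Fin (2 * n) × Fin (2 * n) => kl.1 < kl.2),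
          (a kl.1 i * a kl.2 j - p kl.1 kl.2 • (a kl.2 i * a kl.1 j)) *
            b kl.1 kl.2) := by
  have hc_minor (i j : Fin (2 * n)) := (hc i j).trans
    (sum_sum_mul_mul_eq_sum_qMinor₂_mul hb0 hbskew hcomm i j)
  refine ⟨fun i => ?_, fun i j hij => ?_, fun i j _ => hc_minor i j⟩
  · rw [hc_minor]
    exact sum_eq_zero fun kl hkl => by
      rw [ha.qMinor₂_self (mem_filter.1 hkl).2, zero_mul]
  · rw [hc_minor, hc_minor, smul_sum]
    refine sum_congr rfl fun kl hkl => ?_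
    rw [ha.qMinor₂_swap (mem_filter.1 hkl).2 hij (hpq.1 i j).1, smul_mul_assoc]

/-- For a `p`-antisymmetric `B` commuting with the quantum matrix
`A`, the matrix `C = AᵀBA` is again `p`-antisymmetric and its entries are
expressed through the `2×2` quantum minors of `A`. -/
theorem transformed_antisymmetric {R : Type*} [Ring R] [Algebra ℂ R]
    {n : ℕ} (lam : ℂ)
    (p q : Fin (2 * n) → Fin (2 * n) → ℂ)
    (hpq : ParamConds p q) (hpl : PLambdaCond p q lam)
    (a : Fin (2 * n) → Fin (2 * n) → R) (ha : IsQuantumMatrix p q a)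
    (b : Fin (2 * n) → Fin (2 * n) → R)
    (hb0 : ∀ i, b i i = 0)
    (hbskew : ∀ i j : Fin (2 * n), i < j → b j i = -(p i j) • b i j)
    (hcomm : ∀ i j k l, Commute (b i j) (a k l))
    (c : Fin (2 * n) → Fin (2 * n) → R)
    (hc : ∀ i j, c i j = ∑ k, ∑ l, a k i * b k l * a l j) :
    (∀ i, c i i = 0) ∧
    (∀ i j : Fin (2 * n), i < j → c j i = -(p i j) • c i j) ∧
    (∀ i j : Fin (2 * n), i < j →
      c i j =
        ∑ kl ∈ Finset.univ.filter
            (fun kl : Fin (2 * n) × Fin (2 * n) => kl.1 < kl.2),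
          (a kl.1 i * a kl.2 j - p kl.1 kl.2 • (a kl.2 i * a kl.1 j)) *
            b kl.1 kl.2) :=
  transformed_antisymmetric_general p q hpq a ha b hb0 hbskew hcomm c hc
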